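/- arXiv:math-ph/0512066 — 2 statements merged into one kernel-verified Lean document; each statement's English description precedes it below -/
import Mathlib

section
/- Let d > 0, l > 0, let m ≥ 1 be an integer, and let ξ, λ be real numbers with Λ_{m−1}(l) ≤ ξ < 1, ξ < Λ_m(l), and Λ_{m−1}(l) ≤ λ ≤ Λ_m(l), where Λ_j(l) := π²/(π+d)² + π²·j²/(4·l²). Then |λ − ξ| ≤ (π²/(4·l²))·(1 + (4·l/π)·√(1 − π²/(π+d)²)). -/
open Real

/-- Quantitative accumulation estimate: if `Λ_{m−1}(l) ≤ ξ < 1`, `ξ < Λ_m(l)`, and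
`Λ_{m−1}(l) ≤ λ ≤ Λ_m(l)` with `Λ_j(l) = π²/(π+d)² + π²j²/(4l²)`, then
`|λ − ξ| ≤ (π²/(4l²))·(1 + (4l/π)·√(1 − π²/(π+d)²))`. -/
theorem accumulation_estimate
    (d l : ℝ) (hd : 0 < d) (hl : 0 < l) (m : ℕ) (hm : 1 ≤ m) (ξ lam : ℝ)
    (h1 : π ^ 2 / (π + d) ^ 2 + π ^ 2 * ((m : ℝ) - 1) ^ 2 / (4 * l ^ 2) ≤ ξ)
    (h2 : ξ < 1)
    (h3 : ξ < π ^ 2 / (π + d) ^ 2 + π ^ 2 * (m : ℝ) ^ 2 / (4 * l ^ 2))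
    (h4 : π ^ 2 / (π + d) ^ 2 + π ^ 2 * ((m : ℝ) - 1) ^ 2 / (4 * l ^ 2) ≤ lam)
    (h5 : lam ≤ π ^ 2 / (π + d) ^ 2 + π ^ 2 * (m : ℝ) ^ 2 / (4 * l ^ 2)) :
    |lam - ξ| ≤ (π ^ 2 / (4 * l ^ 2))
      * (1 + (4 * l / π) * Real.sqrt (1 - π ^ 2 / (π + d) ^ 2)) := by
  have hπ : 0 < π := Real.pi_pos
  have hmR : (1 : ℝ) ≤ (m : ℝ) := by exact_mod_cast hm
  -- key: π (m-1) / (2 l) ≤ √(1 - κ²)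
  have hsq : (π * ((m : ℝ) - 1) / (2 * l)) ^ 2 ≤ 1 - π ^ 2 / (π + d) ^ 2 := by
    have : π ^ 2 * ((m : ℝ) - 1) ^ 2 / (4 * l ^ 2) ≤ 1 - π ^ 2 / (π + d) ^ 2 := by
      nlinarith [h1, h2]
    calc (π * ((m : ℝ) - 1) / (2 * l)) ^ 2
        = π ^ 2 * ((m : ℝ) - 1) ^ 2 / (4 * l ^ 2) := by ring
      _ ≤ _ := this
  have hx : (0:ℝ) ≤ (m : ℝ) - 1 := by linarith
  have hnn : 0 ≤ π * ((m : ℝ) - 1) / (2 * l) :=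
    div_nonneg (mul_nonneg hπ.le hx) (by positivity)
  have hkey : π * ((m : ℝ) - 1) / (2 * l) ≤ Real.sqrt (1 - π ^ 2 / (π + d) ^ 2) := by
    have := Real.sqrt_le_sqrt hsq
    rwa [Real.sqrt_sq hnn] at this
  have habs : |lam - ξ| ≤ π ^ 2 * (2 * (m : ℝ) - 1) / (4 * l ^ 2) := by
    have hid : π ^ 2 * (m : ℝ) ^ 2 / (4 * l ^ 2) - π ^ 2 * ((m : ℝ) - 1) ^ 2 / (4 * l ^ 2)
        = π ^ 2 * (2 * (m : ℝ) - 1) / (4 * l ^ 2) := by ring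
    rw [abs_le]
    constructor <;> linarith
  refine habs.trans ?_
  have hmul : 2 * ((m : ℝ) - 1) ≤ (4 * l / π) * Real.sqrt (1 - π ^ 2 / (π + d) ^ 2) := by
    have h := mul_le_mul_of_nonneg_left hkey (le_of_lt (by positivity : (0:ℝ) < 4 * l / π))
    calc 2 * ((m : ℝ) - 1) = (4 * l / π) * (π * ((m : ℝ) - 1) / (2 * l)) := by
          field_simp; ring
      _ ≤ _ := h
  have hl2 : 0 < π ^ 2 / (4 * l ^ 2) := by positivity
  calc π ^ 2 * (2 * (m : ℝ) - 1) / (4 * l ^ 2)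
      = (π ^ 2 / (4 * l ^ 2)) * (1 + 2 * ((m : ℝ) - 1)) := by ring
    _ ≤ _ := by nlinarith [hmul, hl2]
end

section
/- Let s > 0, a > 0, and let h : ℝ → ℝ be continuous with support contained in (0,a). Define u(x) := (1/(2s))·∫₀^∞ (exp(−s·|x−t|) − exp(−s·(x+t)))·h(t) dt for x ≥ 0. Then for every x ≥ a: |u(x)| ≤ (√a·exp(s·a)/(2s))·exp(−s·x)·(∫₀^a h(t)² dt)^{1/2}. -/
open MeasureTheory Real

/-! For `t ≤ x` the kernel factors as `2 sinh (s t) e^{-s x}`, and `2 sinh (s t) ≤ e^{s a}` on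
`[0, a]`; so `|u x| ≤ e^{s a} e^{-s x} / (2 s) · ∫₀^a |h|`, and Cauchy–Schwarz against the constant
`1` bounds `∫₀^a |h|` by `√a · ‖h‖_{L²(0,a)}`. -/

theorem integral_abs_le_sqrt_measureReal_mul_sqrt_integral_sq {α : Type*} [MeasurableSpace α]
    {μ : Measure α} [IsFiniteMeasure μ] {f : α → ℝ} (hf : MemLp f 2 μ) :
    ∫ x, |f x| ∂μ ≤ √(μ.real Set.univ) * √(∫ x, f x ^ 2 ∂μ) := by
  have two : ENNReal.ofReal 2 = 2 := by norm_num
  have := integral_mul_le_Lp_mul_Lq_of_nonneg (μ := μ) Real.HolderConjugate.two_two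
    (f := fun _ => (1 : ℝ)) (g := fun x => |f x|) (Filter.Eventually.of_forall fun _ => zero_le_one)
    (Filter.Eventually.of_forall fun x => abs_nonneg (f x)) (two ▸ memLp_const 1)
    (two ▸ hf.norm)
  simpa [sqrt_eq_rpow, rpow_two, sq_abs] using this

theorem exp_neg_abs_sub_sub_exp_neg_add_of_le {s x t : ℝ} (htx : t ≤ x) :
    exp (-(s * |x - t|)) - exp (-(s * (x + t))) = 2 * sinh (s * t) * exp (-(s * x)) := by
  rw [abs_of_nonneg (sub_nonneg.2 htx)]
  calc _ = exp (s * t + -(s * x)) - exp (-(s * t) + -(s * x)) := by ring_nf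
    _ = _ := by rw [exp_add, exp_add, sinh_eq]; ring

theorem abs_exp_neg_abs_sub_sub_exp_neg_add_le {s a x t : ℝ} (hs : 0 ≤ s) (ht : t ∈ Set.Icc 0 a)
    (hax : a ≤ x) :
    |exp (-(s * |x - t|)) - exp (-(s * (x + t)))| ≤ exp (s * a) * exp (-(s * x)) := by
  have hst : 0 ≤ s * t := mul_nonneg hs ht.1
  rw [exp_neg_abs_sub_sub_exp_neg_add_of_le (ht.2.trans hax), abs_mul, abs_of_pos (exp_pos _),
    abs_of_nonneg (mul_nonneg zero_le_two (sinh_nonneg_iff.2 hst))]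
  gcongr
  calc 2 * sinh (s * t) ≤ exp (s * t) := by rw [sinh_eq]; linarith [exp_pos (-(s * t))]
    _ ≤ exp (s * a) := exp_le_exp.2 (mul_le_mul_of_nonneg_left ht.2 hs)

/-- Exponential decay bound for the half-line Green's function solution: for `x ≥ a`,
`|u(x)| ≤ (√a·e^{sa}/(2s))·e^{−sx}·(∫₀^a h²)^{1/2}`. -/
theorem halfline_green_function_decay_bound
    (s a : ℝ) (hs : 0 < s) (ha : 0 < a) (h : ℝ → ℝ) (hcont : Continuous h)
    (hsupp : Function.support h ⊆ Set.Ioo 0 a)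
    (u : ℝ → ℝ)
    (hu : ∀ x : ℝ, u x = (1 / (2 * s)) *
      ∫ t in Set.Ioi (0 : ℝ), (Real.exp (-(s * |x - t|)) - Real.exp (-(s * (x + t)))) * h t) :
    ∀ x : ℝ, a ≤ x →
      |u x| ≤ (Real.sqrt a * Real.exp (s * a) / (2 * s)) * Real.exp (-(s * x))
        * Real.sqrt (∫ t in Set.Ioo (0 : ℝ) a, (h t) ^ 2) := by
  intro x hx
  set C := exp (s * a) * exp (-(s * x))
  have h_memLp : MemLp h 2 (volume.restrict (Set.Ioo 0 a)) :=
    (hcont.memLp_of_hasCompactSupport (HasCompactSupport.intro isCompact_Icc fun t ht =>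
      Function.notMem_support.1 fun h't => ht (Set.Ioo_subset_Icc_self (hsupp h't)))).restrict _
  have h_restrict : ∫ t in Set.Ioi 0, (exp (-(s * |x - t|)) - exp (-(s * (x + t)))) * h t
      = ∫ t in Set.Ioo 0 a, (exp (-(s * |x - t|)) - exp (-(s * (x + t)))) * h t :=
    setIntegral_eq_of_subset_of_forall_sdiff_eq_zero measurableSet_Ioi Set.Ioo_subset_Ioi_self
      fun t ht => by rw [Function.notMem_support.1 (fun h't => ht.2 (hsupp h't)), mul_zero]
  have h_int : |∫ t in Set.Ioo 0 a, (exp (-(s * |x - t|)) - exp (-(s * (x + t)))) * h t|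
      ≤ C * (√a * √(∫ t in Set.Ioo 0 a, h t ^ 2)) := by
    rw [← Real.norm_eq_abs]
    calc _ ≤ ∫ t in Set.Ioo 0 a, C * |h t| := by
          refine norm_integral_le_of_norm_le (h_memLp.norm.integrable one_le_two |>.const_mul C) ?_
          refine (ae_restrict_iff' measurableSet_Ioo).2 (Filter.Eventually.of_forall fun t ht => ?_)
          rw [norm_mul, Real.norm_eq_abs, Real.norm_eq_abs]
          exact mul_le_mul_of_nonneg_right (abs_exp_neg_abs_sub_sub_exp_neg_add_le hs.le
            (Set.Ioo_subset_Icc_self ht) hx) (abs_nonneg _)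
      _ = C * ∫ t in Set.Ioo 0 a, |h t| := integral_const_mul C _
      _ ≤ C * (√a * √(∫ t in Set.Ioo 0 a, h t ^ 2)) := by
          gcongr
          simpa [ha.le] using integral_abs_le_sqrt_measureReal_mul_sqrt_integral_sq h_memLp
  rw [hu x, h_restrict, abs_mul, abs_of_pos (by positivity : (0:ℝ) < 1 / (2 * s))]
  calc _ ≤ 1 / (2 * s) * (C * (√a * √(∫ t in Set.Ioo 0 a, h t ^ 2))) := by gcongr
    _ = _ := by ring
end
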